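/- Let k ≥ 0 and let K = (0,1)³ be the open unit cube with boundary ∂K. Define δH^{3,I}_{k+3} := span of {x y z^{k+3}, y z x^{k+3}, z x y^{k+3}} together with x·𝒫̃_{k+3}(y,z), y·𝒫̃_{k+3}(z,x), and z·𝒫̃_{k+3}(x,y). Then {v ∈ 𝒫_{k+3} ⊕ δH^{3,I}_{k+3} : v vanishes identically on ∂K} = {v ∈ 𝒫_{k+3} : v vanishes identically on ∂K}; equivalently, if p ∈ 𝒫_{k+3} and d ∈ δH^{3,I}_{k+3} are such that p + d vanishes on all six faces of the unit cube, then d = 0. -/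
import Mathlib


open MvPolynomial

/-- Polynomials on `ℝ³`. -/
abbrev R3 := MvPolynomial (Fin 3) ℝ

/-! ### Auxiliary machinery -/

/-- Substitution of the constant `t` for the variable `i`. -/
noncomputable def subst (i : Fin 3) (t : ℝ) : R3 →ₐ[ℝ] R3 :=
  aeval (Function.update X i (C t))

lemma subst_monomial (i : Fin 3) (t : ℝ) (m : Fin 3 →₀ ℕ) (c : ℝ) :
    subst i t (monomial m c) = monomial (m.erase i) (t ^ m i * c) := by
  have hm : monomial m c = X i ^ (m i) * monomial (m.erase i) c := by
    rw [X_pow_eq_monomial, monomial_mul, one_mul, Finsupp.single_add_erase]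
  have herase : subst i t (monomial (m.erase i) c) = monomial (m.erase i) c := by
    rw [subst, aeval_monomial]
    rw [Finsupp.prod_congr (g2 := fun j e => (X j : R3) ^ e) ?_]
    · rw [algebraMap_eq, ← monomial_eq]
    · intro j hj
      have hji : j ≠ i := by
        intro h; subst h; simpa using Finsupp.notMem_support_iff.mpr (Finsupp.erase_same) hj
      rw [Function.update_of_ne hji]
  rw [hm, map_mul, map_pow, subst, aeval_X, Function.update_self, ← subst, herase,
    ← C_pow, C_mul_monomial]

lemma coeff_subst (i : Fin 3) (t : ℝ) (f : R3) (n : Fin 3 →₀ ℕ) :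
    coeff n (subst i t f) =
      ∑ m ∈ f.support, if m.erase i = n then t ^ m i * coeff m f else 0 := by
  conv_lhs => rw [f.as_sum, map_sum, coeff_sum]
  refine Finset.sum_congr rfl fun m _ => ?_
  rw [subst_monomial, coeff_monomial]

lemma erase_eq_self {i : Fin 3} {m : Fin 3 →₀ ℕ} (h : m i = 0) : m.erase i = m := by
  ext j
  rcases eq_or_ne j i with rfl | hj
  · rw [Finsupp.erase_same, h]
  · rw [Finsupp.erase_ne hj]

lemma vanish0 {f : R3} {i : Fin 3} (h : subst i 0 f = 0) {n : Fin 3 →₀ ℕ} (hn : n i = 0) :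
    coeff n f = 0 := by
  have h0 : (0 : ℝ) = ∑ m ∈ f.support, if m.erase i = n then (0:ℝ) ^ m i * coeff m f else 0 := by
    rw [← coeff_subst, h, coeff_zero]
  rw [Finset.sum_eq_single n ?_ ?_] at h0
  · rw [erase_eq_self hn, if_pos rfl, hn, pow_zero, one_mul] at h0
    exact h0.symm
  · intro m hm hmn
    rcases eq_or_ne (m.erase i) n with he | he
    · rcases eq_or_ne (m i) 0 with h0' | h0'
      · exact absurd (by rw [← erase_eq_self h0', he]) hmn
      · rw [if_pos he, zero_pow h0', zero_mul]
    · rw [if_neg he]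
  · intro hn'
    rw [notMem_support_iff.mp hn', mul_zero, if_pos (erase_eq_self hn)]

lemma vanish1 {f : R3} {i : Fin 3} (h : subst i 1 f = 0) {n mstar : Fin 3 →₀ ℕ}
    (hm : mstar.erase i = n)
    (H : ∀ m : Fin 3 →₀ ℕ, m.erase i = n → m ≠ mstar → coeff m f = 0) :
    coeff mstar f = 0 := by
  have h0 : (0 : ℝ) = ∑ m ∈ f.support, if m.erase i = n then (1:ℝ) ^ m i * coeff m f else 0 := by
    rw [← coeff_subst, h, coeff_zero]
  rw [Finset.sum_eq_single mstar ?_ ?_] at h0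
  · rw [if_pos hm, one_pow, one_mul] at h0; exact h0.symm
  · intro m hm' hmn
    rcases eq_or_ne (m.erase i) n with he | he
    · rw [if_pos he, one_pow, one_mul]; exact H m he hmn
    · rw [if_neg he]
  · intro hn'
    rw [notMem_support_iff.mp hn', mul_zero, if_pos hm]

lemma eval_aeval_poly (g : Fin 3 → Polynomial ℝ) (f : R3) (s : ℝ) :
    (aeval g f).eval s = eval (fun i => (g i).eval s) f := by
  have h := eval₂_comp_left (Polynomial.evalRingHom s) (algebraMap ℝ (Polynomial ℝ)) g f
  have h2 : (Polynomial.evalRingHom s).comp (algebraMap ℝ (Polynomial ℝ)) = RingHom.id ℝ := by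
    ext r; simp
  rw [aeval_def, show Polynomial.eval s = ⇑(Polynomial.evalRingHom s) from rfl, h, h2]
  rfl

lemma eval_aeval_mv (g : Fin 3 → R3) (f : R3) (v : Fin 3 → ℝ) :
    eval v (aeval g f) = eval (fun i => eval v (g i)) f := by
  have h := eval₂_comp_left (MvPolynomial.eval v) (algebraMap ℝ R3) g f
  have h2 : (MvPolynomial.eval v : R3 →+* ℝ).comp (algebraMap ℝ R3) = RingHom.id ℝ := by
    ext r; simp
  rw [aeval_def, show MvPolynomial.eval v (eval₂ (algebraMap ℝ R3) g f)
      = (MvPolynomial.eval v : R3 →+* ℝ) (eval₂ (algebraMap ℝ R3) g f) from rfl, h, h2]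
  rfl

lemma extend_root (u : Polynomial ℝ) (h : ∀ s ∈ Set.Icc (0:ℝ) 1, u.eval s = 0) :
    u = 0 := by
  apply Polynomial.eq_zero_of_infinite_isRoot
  exact Set.Infinite.mono (fun s hs => h s hs) (Set.Icc_infinite (by norm_num))

lemma extend_coord (f : R3) (j : Fin 3) (v : Fin 3 → ℝ)
    (h : ∀ s ∈ Set.Icc (0:ℝ) 1, eval (Function.update v j s) f = 0) (s : ℝ) :
    eval (Function.update v j s) f = 0 := by
  set g : Fin 3 → Polynomial ℝ := Function.update (fun i => Polynomial.C (v i)) j Polynomial.X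
    with hg
  have key : ∀ r : ℝ, (aeval g f).eval r = eval (Function.update v j r) f := by
    intro r
    have hfun : (fun i => (g i).eval r) = Function.update v j r := by
      funext i
      rcases eq_or_ne i j with rfl | hij
      · simp [hg]
      · simp [hg, Function.update_of_ne hij]
    rw [eval_aeval_poly, hfun]
  have hz : aeval g f = 0 := extend_root _ (fun r hr => by rw [key]; exact h r hr)
  rw [← key s, hz, Polynomial.eval_zero]

lemma face0 (q : R3) (t : ℝ)
    (hb : ∀ y z : ℝ, y ∈ Set.Icc (0:ℝ) 1 → z ∈ Set.Icc (0:ℝ) 1 → eval ![t,y,z] q = 0) :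
    subst 0 t q = 0 := by
  have h2 : ∀ y ∈ Set.Icc (0:ℝ) 1, ∀ z : ℝ, eval ![t, y, z] q = 0 := by
    intro y hy z
    have hupd : ∀ s : ℝ, Function.update ![t,y,(0:ℝ)] 2 s = ![t,y,s] := by
      intro s; funext i; fin_cases i <;> simp [Function.update]
    have := extend_coord q 2 ![t,y,0] (fun s hs => by rw [hupd]; exact hb y s hy hs) z
    rwa [hupd] at this
  have h1 : ∀ y z : ℝ, eval ![t, y, z] q = 0 := by
    intro y z
    have hupd : ∀ s : ℝ, Function.update ![t,(0:ℝ),z] 1 s = ![t,s,z] := by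
      intro s; funext i; fin_cases i <;> simp [Function.update]
    have := extend_coord q 1 ![t,0,z] (fun s hs => by rw [hupd]; exact h2 s hs z) y
    rwa [hupd] at this
  refine MvPolynomial.funext fun v => ?_
  rw [map_zero, subst, eval_aeval_mv]
  have hv : (fun j => eval v (Function.update X 0 (C t) j)) = ![t, v 1, v 2] := by
    funext j; fin_cases j <;> simp [Function.update]
  rw [hv]
  exact h1 (v 1) (v 2)

lemma face1 (q : R3) (t : ℝ)
    (hb : ∀ x z : ℝ, x ∈ Set.Icc (0:ℝ) 1 → z ∈ Set.Icc (0:ℝ) 1 → eval ![x,t,z] q = 0) :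
    subst 1 t q = 0 := by
  have h2 : ∀ x ∈ Set.Icc (0:ℝ) 1, ∀ z : ℝ, eval ![x, t, z] q = 0 := by
    intro x hx z
    have hupd : ∀ s : ℝ, Function.update ![x,t,(0:ℝ)] 2 s = ![x,t,s] := by
      intro s; funext i; fin_cases i <;> simp [Function.update]
    have := extend_coord q 2 ![x,t,0] (fun s hs => by rw [hupd]; exact hb x s hx hs) z
    rwa [hupd] at this
  have h1 : ∀ x z : ℝ, eval ![x, t, z] q = 0 := by
    intro x z
    have hupd : ∀ s : ℝ, Function.update ![(0:ℝ),t,z] 0 s = ![s,t,z] := by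
      intro s; funext i; fin_cases i <;> simp [Function.update]
    have := extend_coord q 0 ![0,t,z] (fun s hs => by rw [hupd]; exact h2 s hs z) x
    rwa [hupd] at this
  refine MvPolynomial.funext fun v => ?_
  rw [map_zero, subst, eval_aeval_mv]
  have hv : (fun j => eval v (Function.update X 1 (C t) j)) = ![v 0, t, v 2] := by
    funext j; fin_cases j <;> simp [Function.update]
  rw [hv]
  exact h1 (v 0) (v 2)

lemma face2 (q : R3) (t : ℝ)
    (hb : ∀ x y : ℝ, x ∈ Set.Icc (0:ℝ) 1 → y ∈ Set.Icc (0:ℝ) 1 → eval ![x,y,t] q = 0) :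
    subst 2 t q = 0 := by
  have h2 : ∀ x ∈ Set.Icc (0:ℝ) 1, ∀ y : ℝ, eval ![x, y, t] q = 0 := by
    intro x hx y
    have hupd : ∀ s : ℝ, Function.update ![x,(0:ℝ),t] 1 s = ![x,s,t] := by
      intro s; funext i; fin_cases i <;> simp [Function.update]
    have := extend_coord q 1 ![x,0,t] (fun s hs => by rw [hupd]; exact hb x s hx hs) y
    rwa [hupd] at this
  have h1 : ∀ x y : ℝ, eval ![x, y, t] q = 0 := by
    intro x y
    have hupd : ∀ s : ℝ, Function.update ![(0:ℝ),y,t] 0 s = ![s,y,t] := by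
      intro s; funext i; fin_cases i <;> simp [Function.update]
    have := extend_coord q 0 ![0,y,t] (fun s hs => by rw [hupd]; exact h2 s hs y) x
    rwa [hupd] at this
  refine MvPolynomial.funext fun v => ?_
  rw [map_zero, subst, eval_aeval_mv]
  have hv : (fun j => eval v (Function.update X 2 (C t) j)) = ![v 0, v 1, t] := by
    funext j; fin_cases j <;> simp [Function.update]
  rw [hv]
  exact h1 (v 0) (v 1)

lemma deg_eq (m : Fin 3 →₀ ℕ) : ∑ i ∈ m.support, m i = m 0 + m 1 + m 2 := by
  rw [show m 0 + m 1 + m 2 = ∑ i : Fin 3, m i from (Fin.sum_univ_three _).symm]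
  exact Finset.sum_subset (Finset.subset_univ _) (fun x _ hx => Finsupp.notMem_support_iff.mp hx)

lemma fdeg_eq (m : Fin 3 →₀ ℕ) : m.degree = m 0 + m 1 + m 2 := by
  rw [Finsupp.degree]; exact deg_eq m

noncomputable def ea (k : ℕ) : Fin 3 →₀ ℕ :=
  Finsupp.single 0 1 + Finsupp.single 1 1 + Finsupp.single 2 (k+3)
noncomputable def eb (k : ℕ) : Fin 3 →₀ ℕ :=
  Finsupp.single 1 1 + Finsupp.single 2 1 + Finsupp.single 0 (k+3)
noncomputable def ec (k : ℕ) : Fin 3 →₀ ℕ :=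
  Finsupp.single 2 1 + Finsupp.single 0 1 + Finsupp.single 1 (k+3)

lemma ea_apply (k : ℕ) : ea k 0 = 1 ∧ ea k 1 = 1 ∧ ea k 2 = k + 3 := by
  refine ⟨?_, ?_, ?_⟩ <;> simp [ea, Finsupp.single_apply]
lemma eb_apply (k : ℕ) : eb k 0 = k + 3 ∧ eb k 1 = 1 ∧ eb k 2 = 1 := by
  refine ⟨?_, ?_, ?_⟩ <;> simp [eb, Finsupp.single_apply]
lemma ec_apply (k : ℕ) : ec k 0 = 1 ∧ ec k 1 = k + 3 ∧ ec k 2 = 1 := by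
  refine ⟨?_, ?_, ?_⟩ <;> simp [ec, Finsupp.single_apply]

lemma hXa (k : ℕ) : (X 0 * X 1 * X 2 ^ (k+3) : R3) = monomial (ea k) 1 := by
  rw [X_pow_eq_monomial, X, X, monomial_mul, monomial_mul, one_mul, one_mul, ea]
lemma hXb (k : ℕ) : (X 1 * X 2 * X 0 ^ (k+3) : R3) = monomial (eb k) 1 := by
  rw [X_pow_eq_monomial, X, X, monomial_mul, monomial_mul, one_mul, one_mul, eb]
lemma hXc (k : ℕ) : (X 2 * X 0 * X 1 ^ (k+3) : R3) = monomial (ec k) 1 := by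
  rw [X_pow_eq_monomial, X, X, monomial_mul, monomial_mul, one_mul, one_mul, ec]

lemma coeff_Xmul_ne {i : Fin 3} {h : R3} (hx : ∀ m ∈ h.support, m i = 0)
    (m : Fin 3 →₀ ℕ) (hm : m i ≠ 1) : coeff m (X i * h) = 0 := by
  rw [coeff_X_mul']
  split_ifs with hmem
  · by_contra hne
    have h0 : m i ≠ 0 := Finsupp.mem_support_iff.mp hmem
    have := hx _ (mem_support_iff.mpr hne)
    rw [Finsupp.tsub_apply, Finsupp.single_eq_same] at this
    omega
  · rfl

lemma coeff_Xmul_deg {i : Fin 3} {h : R3} {n : ℕ} (hh : h.IsHomogeneous n)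
    (m : Fin 3 →₀ ℕ) (hm : m 0 + m 1 + m 2 ≠ n + 1) : coeff m (X i * h) = 0 := by
  rw [coeff_X_mul']
  split_ifs with hmem
  · apply hh.coeff_eq_zero
    rw [fdeg_eq]
    have h0 : m i ≠ 0 := Finsupp.mem_support_iff.mp hmem
    have e0 : ∀ j : Fin 3, (m - Finsupp.single i 1 : Fin 3 →₀ ℕ) j
        = m j - (Finsupp.single i 1 : Fin 3 →₀ ℕ) j :=
      fun j => Finsupp.tsub_apply m (Finsupp.single i 1) j
    have hs : (Finsupp.single i 1 : Fin 3 →₀ ℕ) 0 + (Finsupp.single i 1 : Fin 3 →₀ ℕ) 1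
        + (Finsupp.single i 1 : Fin 3 →₀ ℕ) 2 = 1 := by
      fin_cases i <;> simp [Finsupp.single_apply]
    have hsle : ∀ j : Fin 3, (Finsupp.single i 1 : Fin 3 →₀ ℕ) j ≤ 1 := by
      intro j; rcases eq_or_ne i j with rfl|hj
      · simp
      · simp [Finsupp.single_apply, hj]
    have hi : (Finsupp.single i 1 : Fin 3 →₀ ℕ) i = 1 := Finsupp.single_eq_same
    have hmi : 1 ≤ m i := Nat.one_le_iff_ne_zero.mpr h0
    rw [e0 0, e0 1, e0 2]
    have h00 := hsle 0; have h11 := hsle 1; have h22 := hsle 2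
    fin_cases i <;> simp_all [Finsupp.single_apply] <;> omega
  · rfl

/-! ### Main theorem -/

/-- If `p ∈ 𝒫_{k+3}` and `d ∈ δH^{3,I}_{k+3}` (the span of
`x y z^{k+3}, y z x^{k+3}, z x y^{k+3}` together with `x·𝒫̃_{k+3}(y,z)`,
`y·𝒫̃_{k+3}(z,x)` and `z·𝒫̃_{k+3}(x,y)`) are such that `p + d` vanishes
identically on the boundary of the unit cube `(0,1)³`, then `d = 0`;
equivalently, the `H¹`-bubble functions of `𝒫_{k+3} ⊕ δH^{3,I}_{k+3}` on the
unit cube are exactly those of `𝒫_{k+3}`. -/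
theorem stmt_16 (k : ℕ) (p d h₁ h₂ h₃ : R3) (a b c : ℝ)
    (hp : p.totalDegree ≤ k + 3)
    (hh₁ : h₁.IsHomogeneous (k + 3)) (hh₁x : ∀ m ∈ h₁.support, m 0 = 0)
    (hh₂ : h₂.IsHomogeneous (k + 3)) (hh₂y : ∀ m ∈ h₂.support, m 1 = 0)
    (hh₃ : h₃.IsHomogeneous (k + 3)) (hh₃z : ∀ m ∈ h₃.support, m 2 = 0)
    (hd : d = a • (X 0 * X 1 * X 2 ^ (k + 3)) + b • (X 1 * X 2 * X 0 ^ (k + 3))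
        + c • (X 2 * X 0 * X 1 ^ (k + 3)) + X 0 * h₁ + X 1 * h₂ + X 2 * h₃)
    (hbd : ∀ x y z : ℝ, x ∈ Set.Icc (0 : ℝ) 1 → y ∈ Set.Icc (0 : ℝ) 1 →
      z ∈ Set.Icc (0 : ℝ) 1 →
      (x = 0 ∨ x = 1 ∨ y = 0 ∨ y = 1 ∨ z = 0 ∨ z = 1) →
      eval ![x, y, z] (p + d) = 0) :
    d = 0 := by
  -- the six face identities
  have hsub : ∀ (i : Fin 3) (t : ℝ), (t = 0 ∨ t = 1) → subst i t (p + d) = 0 := by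
    intro i t ht
    have htIcc : t ∈ Set.Icc (0:ℝ) 1 := by rcases ht with rfl|rfl <;> norm_num
    fin_cases i
    · exact face0 _ t (fun y z hy hz => hbd t y z htIcc hy hz
        (by rcases ht with rfl|rfl
            · exact Or.inl rfl
            · exact Or.inr (Or.inl rfl)))
    · exact face1 _ t (fun x z hx hz => hbd x t z hx htIcc hz
        (by rcases ht with rfl|rfl
            · exact Or.inr (Or.inr (Or.inl rfl))
            · exact Or.inr (Or.inr (Or.inr (Or.inl rfl)))))
    · exact face2 _ t (fun x y hx hy => hbd x y t hx hy htIcc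
        (by rcases ht with rfl|rfl
            · exact Or.inr (Or.inr (Or.inr (Or.inr (Or.inl rfl))))
            · exact Or.inr (Or.inr (Or.inr (Or.inr (Or.inr rfl))))))
  have A : ∀ (i : Fin 3) (m : Fin 3 →₀ ℕ), m i = 0 → coeff m (p + d) = 0 :=
    fun i m hm => vanish0 (hsub i 0 (Or.inl rfl)) hm
  have K : ∀ (i : Fin 3) (m : Fin 3 →₀ ℕ), m i = 1 →
      (∀ m' : Fin 3 →₀ ℕ, m'.erase i = m.erase i → 2 ≤ m' i → coeff m' (p + d) = 0) →
      coeff m (p + d) = 0 := by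
    intro i m hmi H
    refine vanish1 (hsub i 1 (Or.inr rfl)) rfl (fun m' hm' hne => ?_)
    rcases Nat.lt_or_ge (m' i) 2 with hlt | hge
    · have : m' i = 0 ∨ m' i = 1 := by omega
      rcases this with h0 | h1
      · exact A i m' h0
      · exfalso; apply hne
        have r1 := Finsupp.single_add_erase i m'
        have r2 := Finsupp.single_add_erase i m
        rw [h1, hm'] at r1
        rw [hmi] at r2
        exact r1.symm.trans r2
    · exact H m' hm' hge
  -- erase preserves other coordinates
  have EV : ∀ (i j : Fin 3), j ≠ i → ∀ (u u' : Fin 3 →₀ ℕ),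
      u.erase i = u'.erase i → u j = u' j := by
    intro i j hj u u' h
    have h' : (u.erase i) j = (u'.erase i) j := by rw [h]
    rwa [Finsupp.erase_ne hj, Finsupp.erase_ne hj] at h'
  -- coefficient expansions
  have hdcoeff : ∀ m : Fin 3 →₀ ℕ, coeff m d
      = a * (if ea k = m then 1 else 0) + b * (if eb k = m then 1 else 0)
        + c * (if ec k = m then 1 else 0)
        + coeff m (X 0 * h₁) + coeff m (X 1 * h₂) + coeff m (X 2 * h₃) := by
    intro m
    rw [hd, hXa, hXb, hXc]
    simp only [coeff_add, coeff_smul, coeff_monomial, smul_eq_mul]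
  have hq : ∀ m : Fin 3 →₀ ℕ, coeff m (p + d) = coeff m p + coeff m d :=
    fun m => coeff_add m p d
  have hpz : ∀ m : Fin 3 →₀ ℕ, k + 4 ≤ m 0 + m 1 + m 2 → coeff m p = 0 := by
    intro m hm
    apply coeff_eq_zero_of_totalDegree_lt
    rw [deg_eq]; omega
  obtain ⟨ha0, ha1, ha2⟩ := ea_apply k
  obtain ⟨hb0, hb1, hb2⟩ := eb_apply k
  obtain ⟨hc0, hc1, hc2⟩ := ec_apply k
  -- degree ≥ k+6 : pure degree count
  have T6 : ∀ m : Fin 3 →₀ ℕ, k + 6 ≤ m 0 + m 1 + m 2 → coeff m (p + d) = 0 := by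
    intro m hm
    have hna : ¬ (ea k = m) := fun h => by rw [← h] at hm; omega
    have hnb : ¬ (eb k = m) := fun h => by rw [← h] at hm; omega
    have hnc : ¬ (ec k = m) := fun h => by rw [← h] at hm; omega
    rw [hq, hpz m (by omega), hdcoeff, if_neg hna, if_neg hnb, if_neg hnc,
      coeff_Xmul_deg hh₁ m (by omega), coeff_Xmul_deg hh₂ m (by omega),
      coeff_Xmul_deg hh₃ m (by omega)]
    ring
  -- degree k+5
  have T5 : ∀ m : Fin 3 →₀ ℕ, m 0 + m 1 + m 2 = k + 5 → coeff m (p + d) = 0 := by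
    intro m hm
    by_cases h0 : m 0 = 0
    · exact A 0 m h0
    by_cases h1 : m 1 = 0
    · exact A 1 m h1
    by_cases h2 : m 2 = 0
    · exact A 2 m h2
    by_cases hm0 : m 0 = 1
    · refine K 0 m hm0 (fun m' hm' hge => ?_)
      have e1 : m' 1 = m 1 := EV 0 1 (by decide) m' m hm'
      have e2 : m' 2 = m 2 := EV 0 2 (by decide) m' m hm'
      exact T6 m' (by omega)
    by_cases hm1 : m 1 = 1
    · refine K 1 m hm1 (fun m' hm' hge => ?_)
      have e1 : m' 0 = m 0 := EV 1 0 (by decide) m' m hm'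
      have e2 : m' 2 = m 2 := EV 1 2 (by decide) m' m hm'
      exact T6 m' (by omega)
    by_cases hm2 : m 2 = 1
    · refine K 2 m hm2 (fun m' hm' hge => ?_)
      have e1 : m' 0 = m 0 := EV 2 0 (by decide) m' m hm'
      have e2 : m' 1 = m 1 := EV 2 1 (by decide) m' m hm'
      exact T6 m' (by omega)
    -- all exponents ≥ 2
    have hna : ¬ (ea k = m) := fun h => hm0 (by rw [← h]; exact ha0)
    have hnb : ¬ (eb k = m) := fun h => hm1 (by rw [← h]; exact hb1)
    have hnc : ¬ (ec k = m) := fun h => hm2 (by rw [← h]; exact hc2)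
    rw [hq, hpz m (by omega), hdcoeff, if_neg hna, if_neg hnb, if_neg hnc,
      coeff_Xmul_deg hh₁ m (by omega), coeff_Xmul_deg hh₂ m (by omega),
      coeff_Xmul_deg hh₃ m (by omega)]
    ring
  -- degree k+4
  have T4 : ∀ m : Fin 3 →₀ ℕ, m 0 + m 1 + m 2 = k + 4 → coeff m (p + d) = 0 := by
    intro m hm
    by_cases h0 : m 0 = 0
    · exact A 0 m h0
    by_cases h1 : m 1 = 0
    · exact A 1 m h1
    by_cases h2 : m 2 = 0
    · exact A 2 m h2
    by_cases hm0 : m 0 = 1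
    · refine K 0 m hm0 (fun m' hm' hge => ?_)
      have e1 : m' 1 = m 1 := EV 0 1 (by decide) m' m hm'
      have e2 : m' 2 = m 2 := EV 0 2 (by decide) m' m hm'
      have : m' 0 + m' 1 + m' 2 = k + 5 ∨ k + 6 ≤ m' 0 + m' 1 + m' 2 := by omega
      rcases this with h | h
      · exact T5 m' h
      · exact T6 m' h
    by_cases hm1 : m 1 = 1
    · refine K 1 m hm1 (fun m' hm' hge => ?_)
      have e1 : m' 0 = m 0 := EV 1 0 (by decide) m' m hm'
      have e2 : m' 2 = m 2 := EV 1 2 (by decide) m' m hm'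
      have : m' 0 + m' 1 + m' 2 = k + 5 ∨ k + 6 ≤ m' 0 + m' 1 + m' 2 := by omega
      rcases this with h | h
      · exact T5 m' h
      · exact T6 m' h
    by_cases hm2 : m 2 = 1
    · refine K 2 m hm2 (fun m' hm' hge => ?_)
      have e1 : m' 0 = m 0 := EV 2 0 (by decide) m' m hm'
      have e2 : m' 1 = m 1 := EV 2 1 (by decide) m' m hm'
      have : m' 0 + m' 1 + m' 2 = k + 5 ∨ k + 6 ≤ m' 0 + m' 1 + m' 2 := by omega
      rcases this with h | h
      · exact T5 m' h
      · exact T6 m' h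
    -- all exponents ≥ 2
    have hna : ¬ (ea k = m) := fun h => hm0 (by rw [← h]; exact ha0)
    have hnb : ¬ (eb k = m) := fun h => hm1 (by rw [← h]; exact hb1)
    have hnc : ¬ (ec k = m) := fun h => hm2 (by rw [← h]; exact hc2)
    rw [hq, hpz m (by omega), hdcoeff, if_neg hna, if_neg hnb, if_neg hnc,
      coeff_Xmul_ne hh₁x m hm0, coeff_Xmul_ne hh₂y m hm1, coeff_Xmul_ne hh₃z m hm2]
    ring
  -- conclusion
  refine MvPolynomial.ext _ _ (fun m => ?_)
  rw [coeff_zero]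
  by_cases hdm : k + 4 ≤ m 0 + m 1 + m 2
  · have hqz : coeff m (p + d) = 0 := by
      have : m 0 + m 1 + m 2 = k + 4 ∨ m 0 + m 1 + m 2 = k + 5
          ∨ k + 6 ≤ m 0 + m 1 + m 2 := by omega
      rcases this with h | h | h
      · exact T4 m h
      · exact T5 m h
      · exact T6 m h
    rw [hq, hpz m hdm, zero_add] at hqz
    exact hqz
  · have hna : ¬ (ea k = m) := fun h => hdm (by rw [← h]; omega)
    have hnb : ¬ (eb k = m) := fun h => hdm (by rw [← h]; omega)
    have hnc : ¬ (ec k = m) := fun h => hdm (by rw [← h]; omega)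
    rw [hdcoeff, if_neg hna, if_neg hnb, if_neg hnc,
      coeff_Xmul_deg hh₁ m (by omega), coeff_Xmul_deg hh₂ m (by omega),
      coeff_Xmul_deg hh₃ m (by omega)]
    ring
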